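/- Let G be a graph with β(L,R) ≤ θ < 1 for some pair subgraph U = (L,R). Then for every integer t ≥ 0 there exists a vertex v ∈ U such that |χ_v Mᵗ|(U) ≥ (2-2θ)ᵗ, where χ_v is the indicator vector of v, M = I - D⁻¹A, and |p|(U) = Σ_{u∈U} |p(u)|. -/

import Mathlib

/-!
Let `σ = 𝟙_L - 𝟙_R` and `P s = σᵀ D Mˢ σ`. Conjugating by `D^{1/2}` turns `M = I - D⁻¹A` into
the normalized Laplacian `N = I - D^{-1/2} A D^{-1/2}`, so `P s = wᵀ Nˢ w` with `w = D^{1/2} σ`.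
As `N` is positive semidefinite, Cauchy–Schwarz for `√N` makes `P` log-convex, hence
`P t ≥ (P 1 / P 0)ᵗ P 0`. Here `P 0 = vol U` and `P 1 = 2 vol U - 4 e(L) - 4 e(R) - e(U,Ū)`,
which is at least `(2 - 2θ) vol U`. Finally `P t ≤ ∑_{v ∈ U} d v |χ_v Mᵗ|(U)`, and averaging
over `v` with weights `d v` produces the vertex.
-/

open Finset Matrix

theorem pow_mul_le_of_sq_le_mul {a : ℕ → ℝ} {c : ℝ} (hc : 0 < c) (h0 : 0 < a 0)
    (h1 : c * a 0 ≤ a 1) (ha : ∀ t, a (t + 1) ^ 2 ≤ a t * a (t + 2)) (t : ℕ) :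
    c ^ t * a 0 ≤ a t := by
  suffices h : ∀ t, c ^ t * a 0 ≤ a t ∧ c * a t ≤ a (t + 1) from (h t).1
  intro t
  induction t with
  | zero => simpa using h1
  | succ n ih =>
    obtain ⟨hn, hstep⟩ := ih
    have hpos : 0 < a n := (by positivity : 0 < c ^ n * a 0).trans_le hn
    have hgrow : c ^ (n + 1) * a 0 ≤ a (n + 1) := by
      rw [pow_succ', mul_assoc]
      exact (mul_le_mul_of_nonneg_left hn hc.le).trans hstep
    refine ⟨hgrow, ?_⟩
    have hnext : 0 ≤ a (n + 1) := (by positivity : 0 ≤ c * a n).trans hstep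
    refine le_of_mul_le_mul_left ?_ hpos
    nlinarith [ha n, mul_le_mul_of_nonneg_right hstep hnext]

theorem Finset.sum_sum_union_of_disjoint {α M : Type*} [DecidableEq α] [AddCommMonoid M]
    {s t : Finset α} (hst : Disjoint s t) (f : α → α → M) :
    ∑ i ∈ s ∪ t, ∑ j ∈ s ∪ t, f i j = ∑ i ∈ s, ∑ j ∈ s, f i j + ∑ i ∈ s, ∑ j ∈ t, f i j
      + (∑ i ∈ t, ∑ j ∈ s, f i j + ∑ i ∈ t, ∑ j ∈ t, f i j) := by
  simp only [sum_union hst, sum_add_distrib]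

theorem Matrix.indicator_dotProduct_mulVec_indicator {n R : Type*} [Fintype n]
    [NonAssocSemiring R] (B : Matrix n n R) (s t : Finset n) :
    (s : Set n).indicator 1 ⬝ᵥ (B *ᵥ (t : Set n).indicator 1) = ∑ i ∈ s, ∑ j ∈ t, B i j := by
  classical
  simp only [dotProduct, mulVec, Set.indicator_apply, mem_coe, Pi.one_apply, mul_ite, mul_one,
    mul_zero, ite_mul, one_mul, zero_mul, sum_ite_mem, univ_inter]

theorem Matrix.IsSymm.dotProduct_pow_add_mulVec {n : Type*} [Fintype n] [DecidableEq n]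
    {Q : Matrix n n ℝ} (hQ : Q.IsSymm) (x : n → ℝ) (i j : ℕ) :
    x ⬝ᵥ (Q ^ (i + j) *ᵥ x) = (Q ^ i *ᵥ x) ⬝ᵥ (Q ^ j *ᵥ x) := by
  rw [pow_add, ← mulVec_mulVec, dotProduct_mulVec, ← mulVec_transpose, transpose_pow, hQ.eq]

open scoped MatrixOrder in
theorem Matrix.PosSemidef.sq_dotProduct_pow_succ_mulVec_le {n : Type*} [Fintype n]
    [DecidableEq n] {N : Matrix n n ℝ} (hN : N.PosSemidef) (x : n → ℝ) (s : ℕ) :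
    (x ⬝ᵥ (N ^ (s + 1) *ᵥ x)) ^ 2 ≤ (x ⬝ᵥ (N ^ s *ᵥ x)) * (x ⬝ᵥ (N ^ (s + 2) *ᵥ x)) := by
  -- with `Q = √N`, the three quantities are `⟪Qˢx, Q^(s+2)x⟫`, `‖Qˢx‖²` and `‖Q^(s+2)x‖²`
  set Q := CFC.sqrt N
  have hQ : Q.IsSymm := by
    rw [IsSymm, ← conjTranspose_eq_transpose_of_trivial]
    exact (CFC.sqrt_nonneg N).posSemidef.1
  have hpow : ∀ k, N ^ k = Q ^ (k + k) := fun k => by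
    rw [← CFC.sq_sqrt N hN.nonneg, ← pow_mul, two_mul]
  rw [hpow, hpow, hpow, show s + 1 + (s + 1) = s + (s + 2) by ring,
    hQ.dotProduct_pow_add_mulVec, hQ.dotProduct_pow_add_mulVec, hQ.dotProduct_pow_add_mulVec]
  simpa only [dotProduct, sq] using
    sum_mul_sq_le_sq_mul_sq univ (Q ^ s *ᵥ x) (Q ^ (s + 2) *ᵥ x)

theorem Matrix.IsSymm.dotProduct_mulVec_le_sum_mul_sq {n : Type*} [Fintype n] {A : Matrix n n ℝ}
    (hA : A.IsSymm) (hA0 : ∀ i j, 0 ≤ A i j) (y : n → ℝ) :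
    y ⬝ᵥ (A *ᵥ y) ≤ ∑ v, (∑ u, A v u) * y v ^ 2 := by
  have hsymm : ∑ v, ∑ u, A v u * y u ^ 2 = ∑ v, ∑ u, A v u * y v ^ 2 := by
    rw [sum_comm]
    simp_rw [hA.apply]
  calc y ⬝ᵥ (A *ᵥ y) = ∑ v, ∑ u, A v u * (y v * y u) := by
        simp only [dotProduct, mulVec, mul_sum]
        exact sum_congr rfl fun v _ => sum_congr rfl fun u _ => by ring
    _ ≤ ∑ v, ∑ u, A v u * ((y v ^ 2 + y u ^ 2) / 2) := by
        gcongr with v _ u _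
        · exact hA0 v u
        · nlinarith [sq_nonneg (y v - y u)]
    _ = ∑ v, (∑ u, A v u) * y v ^ 2 := by
        simp only [mul_add, add_div, mul_div_assoc', sum_add_distrib, ← sum_div, hsymm, sum_mul]
        ring

section WeightedGraph

variable {V : Type*} [Fintype V] [DecidableEq V] (A : Matrix V V ℝ) (d : V → ℝ)

noncomputable def randomWalkLaplacian : Matrix V V ℝ := 1 - diagonal d⁻¹ * A

noncomputable def normalizedLaplacian : Matrix V V ℝ :=
  1 - diagonal (fun v => (√(d v))⁻¹) * A * diagonal (fun v => (√(d v))⁻¹)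

variable {A d}

theorem posSemidef_normalizedLaplacian (hA : A.IsSymm) (hA0 : ∀ v u, 0 ≤ A v u)
    (hd : ∀ v, d v = ∑ u, A v u) : (normalizedLaplacian A d).PosSemidef := by
  set e : V → ℝ := fun v => (√(d v))⁻¹
  refine .of_dotProduct_mulVec_nonneg ?_ fun x => ?_
  · rw [IsHermitian, conjTranspose_eq_transpose_of_trivial, normalizedLaplacian]
    simp [transpose_sub, transpose_mul, hA.eq, Matrix.mul_assoc]
  · -- only `≤`: a vertex with `d v = 0` has `e v = 0`
    have hd_mul : ∀ v, d v * e v ^ 2 ≤ 1 := fun v => by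
      have : 0 ≤ d v := hd v ▸ sum_nonneg fun u _ => hA0 v u
      simp only [e, inv_pow, Real.sq_sqrt this]
      exact mul_inv_le_one
    have hform :
        x ⬝ᵥ (normalizedLaplacian A d *ᵥ x) = x ⬝ᵥ x - (e * x) ⬝ᵥ (A *ᵥ (e * x)) := by
      have hE : ∀ z, diagonal e *ᵥ z = e * z := fun z => funext (mulVec_diagonal e z)
      change x ⬝ᵥ ((1 - diagonal e * A * diagonal e) *ᵥ x) = _
      simp only [sub_mulVec, one_mulVec, dotProduct_sub, ← mulVec_mulVec, hE]
      congr 1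
      simp only [dotProduct, Pi.mul_apply]
      exact sum_congr rfl fun v _ => by ring
    have hsq : ∑ v, (∑ u, A v u) * (e * x) v ^ 2 ≤ x ⬝ᵥ x := by
      simp only [dotProduct, ← hd, Pi.mul_apply, mul_pow, ← mul_assoc]
      exact sum_le_sum fun v _ => by
        simpa [sq] using mul_le_mul_of_nonneg_right (hd_mul v) (mul_self_nonneg (x v))
    simpa [hform] using (hA.dotProduct_mulVec_le_sum_mul_sq hA0 (e * x)).trans hsq

theorem semiconjBy_diagonal_sqrt_randomWalkLaplacian (hd0 : ∀ v, 0 < d v) :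
    SemiconjBy (diagonal fun v => √(d v)) (randomWalkLaplacian A d)
      (normalizedLaplacian A d) := by
  ext v u
  have hv : √(d v) * (d v)⁻¹ = (√(d v))⁻¹ := by rw [← div_eq_mul_inv, Real.sqrt_div_self]
  have hu : (√(d u))⁻¹ * √(d u) = 1 := inv_mul_cancel₀ (Real.sqrt_pos.2 (hd0 u)).ne'
  simp only [randomWalkLaplacian, normalizedLaplacian, Matrix.sub_apply, one_apply, diagonal_mul,
    mul_diagonal, Pi.inv_apply]
  rw [mul_sub, sub_mul, ← mul_assoc, hv, mul_assoc _ _ (√(d u)), hu, mul_one]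
  split_ifs with h <;> simp [h]

theorem diagonal_mul_randomWalkLaplacian (hd0 : ∀ v, d v ≠ 0) :
    diagonal d * randomWalkLaplacian A d = diagonal d - A := by
  rw [randomWalkLaplacian, Matrix.mul_sub, Matrix.mul_one, ← Matrix.mul_assoc,
    diagonal_mul_diagonal]
  simp [hd0]

theorem dotProduct_normalizedLaplacian_pow_mulVec (hd0 : ∀ v, 0 < d v) (x : V → ℝ) (s : ℕ) :
    (diagonal (fun v => √(d v)) *ᵥ x) ⬝ᵥ
        (normalizedLaplacian A d ^ s *ᵥ (diagonal (fun v => √(d v)) *ᵥ x))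
      = x ⬝ᵥ ((diagonal d * randomWalkLaplacian A d ^ s) *ᵥ x) := by
  set S : Matrix V V ℝ := diagonal fun v => √(d v)
  have hSS : S * S = diagonal d := by
    rw [diagonal_mul_diagonal]
    exact congrArg diagonal (funext fun v => Real.mul_self_sqrt (hd0 v).le)
  calc (S *ᵥ x) ⬝ᵥ (normalizedLaplacian A d ^ s *ᵥ (S *ᵥ x))
      = (Sᵀ *ᵥ x) ⬝ᵥ ((normalizedLaplacian A d ^ s * S) *ᵥ x) := by
        rw [diagonal_transpose, mulVec_mulVec]
    _ = x ⬝ᵥ ((S * S * randomWalkLaplacian A d ^ s) *ᵥ x) := by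
        rw [← ((semiconjBy_diagonal_sqrt_randomWalkLaplacian hd0).pow_right s).eq,
          mulVec_transpose, ← dotProduct_mulVec, mulVec_mulVec, Matrix.mul_assoc]
    _ = x ⬝ᵥ ((diagonal d * randomWalkLaplacian A d ^ s) *ᵥ x) := by rw [hSS]

end WeightedGraph

section SignedIndicator

variable {V : Type*} [Fintype V]

noncomputable def signedIndicator (L R : Finset V) : V → ℝ :=
  (L : Set V).indicator 1 - (R : Set V).indicator 1

variable {L R : Finset V}

theorem signedIndicator_dotProduct_mulVec (B : Matrix V V ℝ) :
    signedIndicator L R ⬝ᵥ (B *ᵥ signedIndicator L R) = ∑ v ∈ L, ∑ u ∈ L, B v u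
      - ∑ v ∈ L, ∑ u ∈ R, B v u - ∑ v ∈ R, ∑ u ∈ L, B v u + ∑ v ∈ R, ∑ u ∈ R, B v u := by
  simp only [signedIndicator, mulVec_sub, dotProduct_sub, sub_dotProduct,
    indicator_dotProduct_mulVec_indicator]
  ring

variable [DecidableEq V]

theorem signedIndicator_dotProduct_mulVec_le (hLR : Disjoint L R) (B : Matrix V V ℝ) :
    signedIndicator L R ⬝ᵥ (B *ᵥ signedIndicator L R) ≤ ∑ v ∈ L ∪ R, ∑ u ∈ L ∪ R, |B v u| := by
  have h : ∀ s t : Finset V, |∑ v ∈ s, ∑ u ∈ t, B v u| ≤ ∑ v ∈ s, ∑ u ∈ t, |B v u| := fun s t =>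
    (abs_sum_le_sum_abs _ _).trans (sum_le_sum fun v _ => abs_sum_le_sum_abs _ _)
  rw [signedIndicator_dotProduct_mulVec, sum_sum_union_of_disjoint hLR]
  linarith [(abs_le.1 (h L L)).2, (abs_le.1 (h L R)).1, (abs_le.1 (h R L)).1, (abs_le.1 (h R R)).2]

theorem signedIndicator_dotProduct_diagonal_mulVec (hLR : Disjoint L R) (d : V → ℝ) :
    signedIndicator L R ⬝ᵥ (diagonal d *ᵥ signedIndicator L R) = ∑ v ∈ L ∪ R, d v := by
  have h : ∀ s t : Finset V, ∑ v ∈ s, ∑ u ∈ t, diagonal d v u = ∑ v ∈ s ∩ t, d v := fun s t => by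
    simp [diagonal_apply, sum_ite_eq, sum_ite_mem]
  rw [signedIndicator_dotProduct_mulVec, h, h, h, h, disjoint_iff_inter_eq_empty.1 hLR,
    disjoint_iff_inter_eq_empty.1 hLR.symm, inter_self, inter_self, sum_union hLR]
  simp

theorem signedIndicator_dotProduct_diagonal_sub_mulVec (hLR : Disjoint L R) {A : Matrix V V ℝ}
    {d : V → ℝ} (hd : ∀ v, d v = ∑ u, A v u) :
    signedIndicator L R ⬝ᵥ ((diagonal d - A) *ᵥ signedIndicator L R)
      = 2 * ∑ v ∈ L ∪ R, d v - 2 * ∑ v ∈ L, ∑ u ∈ L, A v u - 2 * ∑ v ∈ R, ∑ u ∈ R, A v u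
        - ∑ v ∈ L ∪ R, ∑ u ∈ (L ∪ R)ᶜ, A v u := by
  have hvol : ∑ v ∈ L ∪ R, d v
      = ∑ v ∈ L ∪ R, ∑ u ∈ L ∪ R, A v u + ∑ v ∈ L ∪ R, ∑ u ∈ (L ∪ R)ᶜ, A v u := by
    rw [← sum_add_distrib]
    exact sum_congr rfl fun v _ => (hd v).trans (sum_add_sum_compl _ _).symm
  rw [sub_mulVec, dotProduct_sub, signedIndicator_dotProduct_diagonal_mulVec hLR,
    signedIndicator_dotProduct_mulVec]
  rw [sum_sum_union_of_disjoint hLR A] at hvol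
  linarith

end SignedIndicator

/-- If `β(L,R) ≤ θ < 1`, then for every `t ≥ 0` there exists `v ∈ U = L ∪ R`
with `|χ_v Mᵗ|(U) ≥ (2-2θ)ᵗ`. -/
theorem exists_vertex_mass_ge {V : Type*} [Fintype V] [DecidableEq V]
    (A : Matrix V V ℝ) (hA : A.IsSymm) (hA0 : ∀ v u, 0 ≤ A v u)
    (d : V → ℝ) (hd : ∀ v, d v = ∑ u, A v u) (hd0 : ∀ v, 0 < d v)
    (M : Matrix V V ℝ)
    (hM : ∀ v u, M v u = (if v = u then 1 else 0) - A v u / d v)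
    (L R : Finset V) (hLR : Disjoint L R)
    (volU : ℝ) (hvolU : volU = ∑ v ∈ L ∪ R, d v) (hvolU0 : 0 < volU)
    (eL eR eOut : ℝ)
    (heL : eL = (∑ u ∈ L, ∑ v ∈ L, A u v) / 2)
    (heR : eR = (∑ u ∈ R, ∑ v ∈ R, A u v) / 2)
    (heOut : eOut = ∑ u ∈ L ∪ R, ∑ v ∈ (L ∪ R)ᶜ, A u v)
    (θ : ℝ) (hθ : θ < 1)
    (hβ : (2 * eL + 2 * eR + eOut) / volU ≤ θ) :
    ∀ t : ℕ, ∃ v ∈ L ∪ R,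
      (2 - 2 * θ) ^ t ≤ ∑ u ∈ L ∪ R, |((Pi.single v (1 : ℝ)) ᵥ* M ^ t) u| := by
  intro t
  obtain rfl : M = randomWalkLaplacian A d := by
    ext v u
    simp [hM, randomWalkLaplacian, one_apply, diagonal_mul, div_eq_inv_mul]
  set P : ℕ → ℝ := fun s =>
    signedIndicator L R ⬝ᵥ ((diagonal d * randomWalkLaplacian A d ^ s) *ᵥ signedIndicator L R)
  have hP0 : P 0 = volU := by
    simp only [P, pow_zero, Matrix.mul_one, signedIndicator_dotProduct_diagonal_mulVec hLR, hvolU]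
  have hP1 : (2 - 2 * θ) * P 0 ≤ P 1 := by
    have hβ' : 2 * eL + 2 * eR + eOut ≤ θ * volU := (div_le_iff₀ hvolU0).1 hβ
    have heOut0 : 0 ≤ eOut := heOut ▸ sum_nonneg fun v _ => sum_nonneg fun u _ => hA0 v u
    rw [hP0]
    simp only [P, pow_one, diagonal_mul_randomWalkLaplacian fun v => (hd0 v).ne',
      signedIndicator_dotProduct_diagonal_sub_mulVec hLR hd, ← hvolU]
    linarith
  have hlogConvex : ∀ s, P (s + 1) ^ 2 ≤ P s * P (s + 2) := fun s => by
    simpa only [P, ← dotProduct_normalizedLaplacian_pow_mulVec hd0] using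
      (posSemidef_normalizedLaplacian hA hA0 hd).sq_dotProduct_pow_succ_mulVec_le _ s
  have hgrowth := pow_mul_le_of_sq_le_mul (by linarith) (hP0 ▸ hvolU0) hP1 hlogConvex t
  rw [hP0] at hgrowth
  set mass : V → ℝ := fun v => ∑ u ∈ L ∪ R, |(randomWalkLaplacian A d ^ t) v u|
  have hmass : P t ≤ ∑ v ∈ L ∪ R, d v * mass v := by
    refine (signedIndicator_dotProduct_mulVec_le hLR _).trans_eq ?_
    simp [mass, abs_mul, abs_of_pos (hd0 _), mul_sum]
  obtain ⟨v, hv, hle⟩ := exists_le_of_sum_le (nonempty_of_sum_ne_zero (hvolU ▸ hvolU0.ne'))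
    (f := fun v => d v * (2 - 2 * θ) ^ t) (g := fun v => d v * mass v)
    (by rw [← sum_mul, ← hvolU]; linarith)
  exact ⟨v, hv, by simpa [single_one_vecMul] using le_of_mul_le_mul_left hle (hd0 v)⟩
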